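/- arXiv:2505.11929 — 5 statements merged into one kernel-verified Lean document; each statement's English description precedes it below -/
import Mathlib

section
/- Let A and B be commuting linear operators on a vector space of smooth functions, let k ≥ 1 and λ ≥ 0 be integers, and let W be a function satisfying A^(λ+k) W = q and B^(λ+1) W = 0. Then the function Q := Σ_{p=0}^{λ} (-1)^p · C(k+p-1, p) · A^(λ-p) B^p W satisfies (A + B)^k Q = q. -/
/-- Theorem 4.1 (Integration–Annihilator method), algebraic form:
for commuting linear operators `A`, `B` on a real vector space, if
`A ^ (λ + k) W = q` and `B ^ (λ + 1) W = 0`, then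
`Q := ∑ p, (-1)^p C(k+p-1, p) • A^(λ-p) B^p W` satisfies `(A + B)^k Q = q`. -/
theorem integration_annihilator {V : Type*} [AddCommGroup V] [Module ℝ V]
    (A B : Module.End ℝ V) (hcomm : A * B = B * A)
    (k lam : ℕ) (hk : 1 ≤ k) (q W : V)
    (hint : (A ^ (lam + k)) W = q)
    (hann : (B ^ (lam + 1)) W = 0) :
    ((A + B) ^ k)
      (∑ p ∈ Finset.range (lam + 1),
        ((-1 : ℤ) ^ p * ((k + p - 1).choose p : ℤ)) • ((A ^ (lam - p) * B ^ p) W)) = q := by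
  subst hint
  clear hk
  have hAB : Commute A B := hcomm
  suffices H : ∀ k : ℕ, ((A + B) ^ k)
      (∑ p ∈ Finset.range (lam + 1),
        ((-1 : ℤ) ^ p * ((k + p - 1).choose p : ℤ)) • ((A ^ (lam - p) * B ^ p) W))
      = (A ^ (lam + k)) W from H k
  intro k
  induction k with
  | zero =>
    rw [pow_zero, Module.End.one_apply]
    rw [Finset.sum_eq_single 0]
    · simp
    · intro p hp hp0
      rw [Nat.choose_eq_zero_of_lt (show 0 + p - 1 < p by omega)]
      simp
    · simp
  | succ k ih =>
    set h : ℕ → V := fun p => ((A ^ (lam + 1 - p) * B ^ p)) W with hh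
    have hzero : h (lam + 1) = 0 := by
      simp only [hh, Nat.sub_self, pow_zero, one_mul, Module.End.mul_apply]
      exact hann
    have hA : ∀ p ≤ lam, A ((A ^ (lam - p) * B ^ p) W) = h p := by
      intro p hp
      simp only [hh]
      rw [show lam + 1 - p = (lam - p) + 1 from by omega, pow_succ', mul_assoc,
        Module.End.mul_apply]
      simp [Module.End.mul_apply]
    have hB : ∀ p, B ((A ^ (lam - p) * B ^ p) W) = h (p + 1) := by
      intro p
      simp only [hh]
      rw [show lam + 1 - (p + 1) = lam - p from by omega, ← Module.End.mul_apply,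
        ← mul_assoc, (hAB.symm.pow_right (lam - p)).eq, mul_assoc, ← pow_succ']
    -- coefficients
    set c : ℕ → ℤ := fun p => (-1 : ℤ) ^ p * ((k + p).choose p : ℤ) with hc
    set d : ℕ → ℤ := fun p => (-1 : ℤ) ^ p * ((k + p - 1).choose p : ℤ) with hd
    set e : ℕ → ℤ := fun p => if p = 0 then 0 else c (p - 1) with he
    have hcoef : ∀ p, c p + e p = d p := by
      intro p
      match p with
      | 0 => simp [hc, he, hd]
      | (j + 1) =>
        simp only [hc, he, hd, Nat.succ_ne_zero, if_false, Nat.add_sub_cancel]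
        rw [show k + (j + 1) - 1 = k + j from by omega,
          show k + (j + 1) = (k + j) + 1 from by omega, Nat.choose_succ_succ]
        push_cast
        ring
    -- key step : (A + B) T(k+1) = A T(k)
    have hstep : (A + B)
        (∑ p ∈ Finset.range (lam + 1),
          ((-1 : ℤ) ^ p * ((k + 1 + p - 1).choose p : ℤ)) • ((A ^ (lam - p) * B ^ p) W))
        = A (∑ p ∈ Finset.range (lam + 1),
          ((-1 : ℤ) ^ p * ((k + p - 1).choose p : ℤ)) • ((A ^ (lam - p) * B ^ p) W)) := by
      have hco : ∀ p, ((-1 : ℤ) ^ p * ((k + 1 + p - 1).choose p : ℤ)) = c p := by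
        intro p; rw [hc, show k + 1 + p - 1 = k + p from by omega]
      simp only [hco, LinearMap.add_apply, map_sum, map_zsmul, smul_add, Finset.sum_add_distrib]
      have e1 : ∑ p ∈ Finset.range (lam + 1), c p • (A ((A ^ (lam - p) * B ^ p) W))
          = ∑ p ∈ Finset.range (lam + 1), c p • h p := by
        refine Finset.sum_congr rfl (fun p hp => ?_)
        rw [hA p (by have := Finset.mem_range.mp hp; omega)]
      have e2 : ∑ p ∈ Finset.range (lam + 1), c p • (B ((A ^ (lam - p) * B ^ p) W))
          = ∑ p ∈ Finset.range (lam + 1), c p • h (p + 1) := by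
        refine Finset.sum_congr rfl (fun p _ => ?_)
        rw [hB p]
      have e3 : ∑ p ∈ Finset.range (lam + 1 + 1), e p • h p
          = ∑ p ∈ Finset.range (lam + 1), c p • h (p + 1) := by
        rw [Finset.sum_range_succ']
        simp [he]
      have e4 : ∑ p ∈ Finset.range (lam + 1 + 1), c p • h p
          = ∑ p ∈ Finset.range (lam + 1), c p • h p := by
        rw [Finset.sum_range_succ, hzero, smul_zero, add_zero]
      have e5 : ∑ p ∈ Finset.range (lam + 1 + 1), d p • h p
          = ∑ p ∈ Finset.range (lam + 1),
              ((-1 : ℤ) ^ p * ((k + p - 1).choose p : ℤ)) • A ((A ^ (lam - p) * B ^ p) W) := by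
        rw [Finset.sum_range_succ, hzero, smul_zero, add_zero]
        refine Finset.sum_congr rfl (fun p hp => ?_)
        rw [hA p (by have := Finset.mem_range.mp hp; omega)]
      rw [e1, e2, ← e3, ← e4, ← e5, ← Finset.sum_add_distrib]
      refine Finset.sum_congr rfl (fun p _ => ?_)
      rw [← add_smul, hcoef p]
    rw [pow_succ, Module.End.mul_apply, hstep]
    have hcomm2 : A * (A + B) ^ k = (A + B) ^ k * A :=
      (((Commute.refl A).add_right hAB).pow_right k).eq
    rw [← Module.End.mul_apply, ← hcomm2, Module.End.mul_apply, ih,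
      ← Module.End.mul_apply, ← pow_succ', add_assoc]
end

section
/- For commuting linear operators A and B and a function W with B^(λ+1) W = 0, the intermediate identity holds: applying D = A + B exactly j times (0 ≤ j ≤ k) to Q := Σ_{p=0}^{λ} (-1)^p C(k+p-1,p) A^(λ-p) B^p W yields D^j Q = A^(λ+j) W + Σ_{p=1}^{λ} (-1)^p C(k+p-j-1, p) A^(λ-p+j) B^p W. -/
private lemma integration_annihilator_aux {V : Type*} [AddCommGroup V] [Module ℝ V]
    (A B : Module.End ℝ V) (hcomm : A * B = B * A)
    (k lam : ℕ) (W : V) (hann : (B ^ (lam + 1)) W = 0) :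
    ∀ j, j ≤ k →
    ((A + B) ^ j)
      (∑ p ∈ Finset.range (lam + 1),
        ((-1 : ℤ) ^ p * ((k + p - 1).choose p : ℤ)) • ((A ^ (lam - p) * B ^ p) W)) =
    ∑ p ∈ Finset.range (lam + 1),
        ((-1 : ℤ) ^ p * ((k + p - j - 1).choose p : ℤ)) • ((A ^ (lam - p + j) * B ^ p) W) := by
  have hAT : ∀ m p : ℕ, A ((A ^ m * B ^ p) W) = (A ^ (m + 1) * B ^ p) W := by
    intro m p
    rw [← Module.End.mul_apply, ← mul_assoc, ← pow_succ']
  have hBT : ∀ m p : ℕ, B ((A ^ m * B ^ p) W) = (A ^ m * B ^ (p + 1)) W := by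
    intro m p
    have hc : Commute B (A ^ m) := (Commute.symm hcomm).pow_right m
    rw [← Module.End.mul_apply, ← mul_assoc, hc.eq, mul_assoc, ← pow_succ']
  intro j
  induction j with
  | zero => intro _; simp
  | succ j ih =>
    intro hj1
    rw [pow_succ', Module.End.mul_apply, ih (by omega), LinearMap.add_apply,
      map_sum, map_sum]
    simp only [map_zsmul, hAT, hBT, ← add_assoc]
    -- kill last term of second sum
    rw [Finset.sum_range_succ (f := fun p =>
      ((-1 : ℤ) ^ p * ((k + p - j - 1).choose p : ℤ)) • ((A ^ (lam - p + j) * B ^ (p + 1)) W))]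
    have hz : (A ^ (lam - lam + j) * B ^ (lam + 1)) W = 0 := by
      rw [Module.End.mul_apply, hann, map_zero]
    rw [hz, smul_zero, add_zero]
    rw [Finset.sum_range_succ' (f := fun p =>
      ((-1 : ℤ) ^ p * ((k + p - j - 1).choose p : ℤ)) • ((A ^ (lam - p + j + 1) * B ^ p) W)),
      Finset.sum_range_succ' (f := fun p =>
      ((-1 : ℤ) ^ p * ((k + p - (j + 1) - 1).choose p : ℤ)) • ((A ^ (lam - p + j + 1) * B ^ p) W))]
    have hc0 : (k + 0 - j - 1).choose 0 = 1 := Nat.choose_zero_right _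
    have hc0' : (k + 0 - (j + 1) - 1).choose 0 = 1 := Nat.choose_zero_right _
    rw [hc0, hc0']
    rw [add_right_comm, ← Finset.sum_add_distrib]
    congr 1
    refine Finset.sum_congr rfl (fun i hi => ?_)
    have hi' : i < lam := Finset.mem_range.mp hi
    have he : lam - (i + 1) + j + 1 = lam - i + j := by omega
    rw [he, ← add_smul]
    congr 1
    have h1 : k + (i + 1) - j - 1 = (k + i - j - 1) + 1 := by omega
    have h2 : k + (i + 1) - (j + 1) - 1 = k + i - j - 1 := by omega
    rw [h1, h2, Nat.choose_succ_succ]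
    push_cast
    ring

/-- The induction invariant (Eq. (9)) of the integration–annihilator method:
for commuting linear operators `A`, `B` with `B^(λ+1) W = 0` and `0 ≤ j ≤ k`,
applying `D = A + B` exactly `j` times to
`Q := ∑ p, (-1)^p C(k+p-1,p) • A^(λ-p) B^p W` yields
`D^j Q = A^(λ+j) W + ∑_{p=1}^{λ} (-1)^p C(k+p-j-1, p) • A^(λ-p+j) B^p W`. -/
theorem integration_annihilator_invariant {V : Type*} [AddCommGroup V] [Module ℝ V]
    (A B : Module.End ℝ V) (hcomm : A * B = B * A)
    (k lam j : ℕ) (hk : 1 ≤ k) (hj : j ≤ k) (W : V)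
    (hann : (B ^ (lam + 1)) W = 0) :
    ((A + B) ^ j)
      (∑ p ∈ Finset.range (lam + 1),
        ((-1 : ℤ) ^ p * ((k + p - 1).choose p : ℤ)) • ((A ^ (lam - p) * B ^ p) W)) =
    (A ^ (lam + j)) W +
      ∑ p ∈ Finset.Icc 1 lam,
        ((-1 : ℤ) ^ p * ((k + p - j - 1).choose p : ℤ)) • ((A ^ (lam - p + j) * B ^ p) W) := by
  rw [integration_annihilator_aux A B hcomm k lam W hann j hj]
  have hsplit : Finset.range (lam + 1) = insert 0 (Finset.Icc 1 lam) := by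
    ext x; simp; omega
  rw [hsplit, Finset.sum_insert (by simp)]
  simp
end

section
/- Let q : ℝⁿ → ℝ be a polynomial of total degree at most d, ν ≠ 0 real, j, k positive integers, and λ := ⌈(d-1)/(2j)⌉. Then Q := Σ_{p=0}^{λ} (-1)^p C(k+p-1, p) ν^(-(p+k)) Δ^(jp) q satisfies (Δ^j + ν)^k Q = q. -/
/-!
The Laplacian lowers the total degree of a polynomial by two, so `A := Δ ^ j` is nilpotent on `q`:
`A ^ (λ + 1) q = 0`. On the finite-dimensional `A`-stable space spanned by the `A ^ p q`, the
operator `A + ν` is therefore invertible, and `Q` is `(A + ν) ^ (-k) q` computed from the binomial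
series `(X + ν) ^ (-k) = ∑ₚ (-1) ^ p C(k + p - 1, p) ν ^ (-(p + k)) X ^ p`, truncated after
degree `λ`. That `(A + ν) ^ k` inverts it follows by induction on `k` from Pascal's rule.
-/

open MvPolynomial

namespace MvPolynomial

variable {σ R : Type*} [CommSemiring R]

theorem totalDegree_pderiv_le (i : σ) (p : MvPolynomial σ R) :
    (pderiv i p).totalDegree ≤ p.totalDegree - 1 := by
  conv_lhs => rw [← sum_homogeneousComponent p, map_sum]
  refine (totalDegree_finsetSum _ _).trans (Finset.sup_le fun m hm => ?_)
  have hm : m ≤ p.totalDegree := Nat.lt_succ_iff.mp (Finset.mem_range.mp hm)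
  exact (homogeneousComponent_isHomogeneous m p).pderiv.totalDegree_le.trans (by omega)

theorem pderiv_eq_zero_of_totalDegree_eq_zero (i : σ) {p : MvPolynomial σ R}
    (hp : p.totalDegree = 0) : pderiv i p = 0 := by
  rw [totalDegree_eq_zero_iff_eq_C.mp hp, pderiv_C]

variable (σ R) [Fintype σ]

noncomputable def laplacian : Module.End R (MvPolynomial σ R) :=
  ∑ i, (pderiv i).toLinearMap ∘ₗ (pderiv i).toLinearMap

variable {σ R}

theorem laplacian_apply_eq_zero_of_totalDegree_le_one {r : MvPolynomial σ R}
    (hr : r.totalDegree ≤ 1) : laplacian σ R r = 0 := by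
  refine (LinearMap.sum_apply _ _ _).trans (Finset.sum_eq_zero fun i _ => ?_)
  have h : (pderiv i r).totalDegree = 0 := by
    have := totalDegree_pderiv_le i r
    omega
  exact pderiv_eq_zero_of_totalDegree_eq_zero i h

theorem totalDegree_laplacian_apply_le (r : MvPolynomial σ R) :
    (laplacian σ R r).totalDegree ≤ r.totalDegree - 2 := by
  rw [laplacian, LinearMap.sum_apply]
  refine (totalDegree_finsetSum _ _).trans (Finset.sup_le fun i _ => ?_)
  have h₁ := totalDegree_pderiv_le i (pderiv i r)
  have h₂ := totalDegree_pderiv_le i r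
  simp only [LinearMap.comp_apply, Derivation.coeFn_coe]
  omega

theorem laplacian_pow_apply_eq_zero {m : ℕ} {r : MvPolynomial σ R}
    (hr : r.totalDegree < 2 * m) : (laplacian σ R ^ m) r = 0 := by
  induction m generalizing r with
  | zero => omega
  | succ m ih =>
    rw [pow_succ, Module.End.mul_apply]
    by_cases hr₁ : r.totalDegree ≤ 1
    · rw [laplacian_apply_eq_zero_of_totalDegree_le_one hr₁, map_zero]
    · exact ih (by have := totalDegree_laplacian_apply_le r; omega)

end MvPolynomial

section BinomialSeries

variable {K M : Type*} [Field K] [AddCommGroup M] [Module K M]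

/-- The coefficient of `X ^ p` in the power series `(X + ν) ^ (-k)`. -/
def invAddPowCoeff (ν : K) (k p : ℕ) : K :=
  (-1) ^ p * ((k + p - 1).choose p : K) * ν ^ (-(p + k : ℤ))

theorem invAddPowCoeff_zero_zero (ν : K) : invAddPowCoeff ν 0 0 = 1 := by
  simp [invAddPowCoeff]

theorem invAddPowCoeff_zero_of_ne_zero (ν : K) {p : ℕ} (hp : p ≠ 0) :
    invAddPowCoeff ν 0 p = 0 := by
  simp [invAddPowCoeff, Nat.choose_eq_zero_of_lt (Nat.sub_one_lt hp)]

theorem mul_invAddPowCoeff_succ_zero {ν : K} (hν : ν ≠ 0) (k : ℕ) :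
    ν * invAddPowCoeff ν (k + 1) 0 = invAddPowCoeff ν k 0 := by
  simp only [invAddPowCoeff, pow_zero, Nat.choose_zero_right, Nat.cast_one, one_mul,
    ← zpow_one_add₀ hν]
  congr 1
  push_cast
  ring

theorem invAddPowCoeff_succ_add_mul_invAddPowCoeff_succ_succ {ν : K} (hν : ν ≠ 0) (k p : ℕ) :
    invAddPowCoeff ν (k + 1) p + ν * invAddPowCoeff ν (k + 1) (p + 1) =
      invAddPowCoeff ν k (p + 1) := by
  have hpascal : ((k + p + 1).choose (p + 1) : K) = (k + p).choose p + (k + p).choose (p + 1) := by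
    rw [Nat.choose_succ_succ', Nat.cast_add]
  have hzpow : ν * ν ^ (-((p + 1 : ℕ) + (k + 1 : ℕ) : ℤ)) = ν ^ (-(p + (k + 1 : ℕ) : ℤ)) := by
    rw [← zpow_one_add₀ hν]
    congr 1
    push_cast
    ring
  have hexp : (-(p + (k + 1 : ℕ) : ℤ)) = -((p + 1 : ℕ) + k : ℤ) := by push_cast; ring
  simp only [invAddPowCoeff, show k + 1 + p - 1 = k + p by omega,
    show k + 1 + (p + 1) - 1 = k + p + 1 by omega, show k + (p + 1) - 1 = k + p by omega]
  rw [hpascal, mul_left_comm ν, hzpow, hexp]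
  ring

theorem add_smul_one_apply_sum_smul_pow_apply {A : Module.End K M} {q : M} {N : ℕ}
    (hN : (A ^ (N + 1)) q = 0) (ν : K) (c : ℕ → K) :
    (A + ν • 1) (∑ p ∈ Finset.range (N + 1), c p • (A ^ p) q) =
      (ν * c 0) • q + ∑ p ∈ Finset.range N, (c p + ν * c (p + 1)) • (A ^ (p + 1)) q := by
  have hshift : A (∑ p ∈ Finset.range (N + 1), c p • (A ^ p) q) =
      ∑ p ∈ Finset.range N, c p • (A ^ (p + 1)) q := by
    simp only [map_sum, map_smul, ← Module.End.mul_apply, ← pow_succ']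
    rw [Finset.sum_range_succ, hN, smul_zero, add_zero]
  rw [LinearMap.add_apply, hshift, LinearMap.smul_apply, Module.End.one_apply, Finset.smul_sum,
    Finset.sum_range_succ', pow_zero, Module.End.one_apply]
  simp only [smul_smul, add_smul, Finset.sum_add_distrib]
  abel

theorem pow_add_smul_one_apply_sum_invAddPowCoeff {A : Module.End K M} {q : M} {N : ℕ}
    (hN : (A ^ (N + 1)) q = 0) {ν : K} (hν : ν ≠ 0) (k : ℕ) :
    ((A + ν • 1) ^ k) (∑ p ∈ Finset.range (N + 1), invAddPowCoeff ν k p • (A ^ p) q) = q := by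
  induction k with
  | zero =>
    rw [pow_zero, Module.End.one_apply, Finset.sum_range_succ', invAddPowCoeff_zero_zero,
      pow_zero, Module.End.one_apply, one_smul, add_eq_right]
    exact Finset.sum_eq_zero fun p _ => by
      rw [invAddPowCoeff_zero_of_ne_zero ν p.succ_ne_zero, zero_smul]
  | succ k ih =>
    rw [pow_succ, Module.End.mul_apply, add_smul_one_apply_sum_smul_pow_apply hN,
      mul_invAddPowCoeff_succ_zero hν]
    simp only [invAddPowCoeff_succ_add_mul_invAddPowCoeff_succ_succ hν]
    convert ih using 2
    rw [Finset.sum_range_succ' _ N, pow_zero, Module.End.one_apply, add_comm]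

end BinomialSeries

theorem generalized_helmholtz_polynomial_solution_general (n d j k : ℕ) (hj : 1 ≤ j)
    (ν : ℝ) (hν : ν ≠ 0)
    (q : MvPolynomial (Fin n) ℝ) (hq : q.totalDegree ≤ d) :
    let Δ : Module.End ℝ (MvPolynomial (Fin n) ℝ) :=
      ∑ i, (MvPolynomial.pderiv i).toLinearMap ∘ₗ (MvPolynomial.pderiv i).toLinearMap
    let lam : ℕ := (d - 1 + (2 * j - 1)) / (2 * j)
    let Q : MvPolynomial (Fin n) ℝ :=
      ∑ p ∈ Finset.range (lam + 1),
        ((-1 : ℝ) ^ p * ((k + p - 1).choose p : ℝ) * ν ^ (-(p + k : ℤ))) • (Δ ^ (j * p)) q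
    ((Δ ^ j + ν • (1 : Module.End ℝ (MvPolynomial (Fin n) ℝ))) ^ k) Q = q := by
  intro Δ lam Q
  have hlam : d < 2 * (j * (lam + 1)) := by
    have := Nat.lt_mul_div_succ (d - 1 + (2 * j - 1)) (show 0 < 2 * j by omega)
    rw [← mul_assoc]
    show d < 2 * j * ((d - 1 + (2 * j - 1)) / (2 * j) + 1)
    omega
  have hnil : ((Δ ^ j) ^ (lam + 1)) q = 0 := by
    rw [← pow_mul]
    exact laplacian_pow_apply_eq_zero (hq.trans_lt hlam)
  have hQ : Q = ∑ p ∈ Finset.range (lam + 1), invAddPowCoeff ν k p • ((Δ ^ j) ^ p) q := by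
    simp only [Q, invAddPowCoeff, pow_mul]
  rw [hQ]
  exact pow_add_smul_one_apply_sum_invAddPowCoeff hnil hν k

/-- Generalized Helmholtz equation `(Δ^j + ν)^k Q = q` for a polynomial `q` on ℝⁿ
of total degree at most `d`: with `λ = ⌈(d-1)/(2j)⌉`,
`Q := ∑_{p=0}^{λ} (-1)^p C(k+p-1,p) ν^{-(p+k)} Δ^{jp} q` is a particular solution. -/
theorem generalized_helmholtz_polynomial_solution (n d j k : ℕ) (hj : 1 ≤ j) (hk : 1 ≤ k)
    (ν : ℝ) (hν : ν ≠ 0)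
    (q : MvPolynomial (Fin n) ℝ) (hq : q.totalDegree ≤ d) :
    let Δ : Module.End ℝ (MvPolynomial (Fin n) ℝ) :=
      ∑ i, (MvPolynomial.pderiv i).toLinearMap ∘ₗ (MvPolynomial.pderiv i).toLinearMap
    let lam : ℕ := (d - 1 + (2 * j - 1)) / (2 * j)
    let Q : MvPolynomial (Fin n) ℝ :=
      ∑ p ∈ Finset.range (lam + 1),
        ((-1 : ℝ) ^ p * ((k + p - 1).choose p : ℝ) * ν ^ (-(p + k : ℤ))) • (Δ ^ (j * p)) q
    ((Δ ^ j + ν • (1 : Module.End ℝ (MvPolynomial (Fin n) ℝ))) ^ k) Q = q :=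
  generalized_helmholtz_polynomial_solution_general n d j k hj ν hν q hq
end

section
/- Let φ : ℝⁿ → ℝⁿ be a C³ vector field with Δφ = f componentwise (Δ the Laplacian acting on each component). Define G(x) := Σ_k ∂_{x_k} φ_k(x) = div φ(x), g := grad G, and r with components r_i := Σ_k ∂_{x_k}(∂_{x_k} φ_i − ∂_{x_i} φ_k). Then f = g + r, g is a gradient field, and div r = 0; i.e., (g, r) is a Helmholtz decomposition of f. -/
/-- Partial derivative in the `i`-th coordinate direction of a scalar field on ℝⁿ. -/
noncomputable def pd {n : ℕ} (i : Fin n) (g : EuclideanSpace ℝ (Fin n) → ℝ) :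
    EuclideanSpace ℝ (Fin n) → ℝ :=
  fun x => fderiv ℝ g x (EuclideanSpace.single i 1)

/-!
With `F = Dφ` the potential matrix, `r` is the row-wise divergence of the skew matrix field
`F - Fᵀ`. By Schwarz's theorem `div (F - Fᵀ) = Δφ - grad (div φ) = f - g`, and the divergence of
the row-wise divergence of any skew matrix field vanishes, since it pairs the symmetric `∂_i ∂_k`
with the antisymmetric entries.
-/

theorem Finset.sum_sum_eq_zero_of_antisymm {ι G : Type*} [AddCommGroup G] [IsAddTorsionFree G]
    (s : Finset ι) {T : ι → ι → G} (hT : ∀ i k, T k i = -T i k) :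
    ∑ i ∈ s, ∑ k ∈ s, T i k = 0 :=
  self_eq_neg.mp <| calc
    ∑ i ∈ s, ∑ k ∈ s, T i k = ∑ i ∈ s, ∑ k ∈ s, T k i := Finset.sum_comm
    _ = ∑ i ∈ s, ∑ k ∈ s, -T i k :=
      Finset.sum_congr rfl fun i _ => Finset.sum_congr rfl fun k _ => hT i k
    _ = -∑ i ∈ s, ∑ k ∈ s, T i k := by simp only [Finset.sum_neg_distrib]

section PartialDerivatives

variable {n : ℕ} {u v : EuclideanSpace ℝ (Fin n) → ℝ} {x : EuclideanSpace ℝ (Fin n)}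

theorem ContDiff.pd {m k : WithTop ℕ∞} (hu : ContDiff ℝ k u) (hmk : m + 1 ≤ k) (i : Fin n) :
    ContDiff ℝ m (pd i u) :=
  (hu.fderiv_right hmk).clm_apply contDiff_const

theorem pd_sub (hu : DifferentiableAt ℝ u x) (hv : DifferentiableAt ℝ v x) (i : Fin n) :
    pd i (fun y => u y - v y) x = pd i u x - pd i v x := by
  simp only [pd, fderiv_fun_sub hu hv, sub_apply]

theorem pd_neg (u : EuclideanSpace ℝ (Fin n) → ℝ) (i : Fin n) : pd i (-u) = -pd i u := by
  funext y
  simp only [pd, fderiv_neg, neg_apply, Pi.neg_apply]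

theorem pd_sum {ι : Type*} (s : Finset ι) {w : ι → EuclideanSpace ℝ (Fin n) → ℝ}
    (hw : ∀ k ∈ s, DifferentiableAt ℝ (w k) x) (i : Fin n) :
    pd i (fun y => ∑ k ∈ s, w k y) x = ∑ k ∈ s, pd i (w k) x := by
  simp only [pd, fderiv_fun_sum hw, sum_apply]

theorem pd_pd_eq_fderiv_fderiv (hu : ContDiffAt ℝ 2 u x) (i j : Fin n) :
    pd i (pd j u) x =
      fderiv ℝ (fderiv ℝ u) x (EuclideanSpace.single i 1) (EuclideanSpace.single j 1) := by
  have hd : DifferentiableAt ℝ (fderiv ℝ u) x :=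
    (hu.fderiv_right (m := 1) le_rfl).differentiableAt one_ne_zero
  change fderiv ℝ (fun y => fderiv ℝ u y (EuclideanSpace.single j 1)) x _ = _
  rw [fderiv_clm_apply hd (differentiableAt_const _)]
  simp only [fderiv_fun_const, Pi.zero_apply, ContinuousLinearMap.comp_zero, zero_add,
    ContinuousLinearMap.flip_apply]

theorem pd_pd_comm (hu : ContDiffAt ℝ 2 u x) (i j : Fin n) :
    pd i (pd j u) x = pd j (pd i u) x := by
  rw [pd_pd_eq_fderiv_fderiv hu, pd_pd_eq_fderiv_fderiv hu,
    (hu.isSymmSndFDerivAt (by simp)).eq]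

end PartialDerivatives

section VectorCalculus

variable {n : ℕ}

noncomputable def divergence (V : EuclideanSpace ℝ (Fin n) → Fin n → ℝ) :
    EuclideanSpace ℝ (Fin n) → ℝ :=
  fun x => ∑ k, pd k (fun y => V y k) x

/-- The potential matrix `F` of the Helmholtz construction. -/
noncomputable def jacobian (φ : EuclideanSpace ℝ (Fin n) → Fin n → ℝ) :
    EuclideanSpace ℝ (Fin n) → Fin n → Fin n → ℝ :=
  fun y i k => pd k (fun z => φ z i) y

/-- The vector identity `div (F - Fᵀ) = Δφ - grad (div φ)`, read row by row. -/
theorem divergence_jacobian_sub_transpose {φ : EuclideanSpace ℝ (Fin n) → Fin n → ℝ}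
    (hφ : ContDiff ℝ 2 φ) (i : Fin n) (x : EuclideanSpace ℝ (Fin n)) :
    divergence (fun y k => jacobian φ y i k - jacobian φ y k i) x =
      ∑ k, pd k (pd k (fun z => φ z i)) x - pd i (divergence φ) x := by
  have hφ' : ∀ k, ContDiff ℝ 2 (fun z => φ z k) := contDiff_pi.mp hφ
  have hd : ∀ j k, DifferentiableAt ℝ (pd j (fun z => φ z k)) x := fun j k =>
    ((hφ' k).pd (m := 1) le_rfl j).differentiable one_ne_zero x
  unfold divergence jacobian
  rw [pd_sum _ (fun k _ => hd k k), ← Finset.sum_sub_distrib]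
  refine Finset.sum_congr rfl fun k _ => ?_
  rw [pd_sub (hd k i) (hd i k), pd_pd_comm (hφ' k).contDiffAt k i]

theorem divergence_divergence_eq_zero_of_antisymm
    {M : EuclideanSpace ℝ (Fin n) → Fin n → Fin n → ℝ}
    (hM : ∀ i k, ContDiff ℝ 2 (fun y => M y i k)) (hskew : ∀ y i k, M y k i = -M y i k)
    (x : EuclideanSpace ℝ (Fin n)) :
    divergence (fun y i => divergence (fun z => M z i) y) x = 0 := by
  have hd : ∀ i k, DifferentiableAt ℝ (pd k (fun y => M y i k)) x := fun i k =>
    ((hM i k).pd (m := 1) le_rfl k).differentiable one_ne_zero x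
  have hswap : ∀ i k, (fun y => M y k i) = -fun y => M y i k := fun i k =>
    funext fun y => hskew y i k
  calc divergence (fun y i => divergence (fun z => M z i) y) x
      = ∑ i, ∑ k, pd i (pd k (fun y => M y i k)) x :=
        Finset.sum_congr rfl fun i _ => pd_sum _ (fun k _ => hd i k) i
    _ = 0 := Finset.sum_sum_eq_zero_of_antisymm _ fun i k => by
        rw [hswap, pd_neg, pd_neg, pd_pd_comm (hM i k).contDiffAt]
        rfl

end VectorCalculus

theorem helmholtz_decomposition_from_poisson_general (n : ℕ)
    (f φ : EuclideanSpace ℝ (Fin n) → Fin n → ℝ)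
    (hφ : ContDiff ℝ 3 φ)
    (hpoisson : ∀ x i, ∑ k, pd k (pd k (fun z => φ z i)) x = f x i) :
    let G : EuclideanSpace ℝ (Fin n) → ℝ := fun x => ∑ k, pd k (fun y => φ y k) x
    let g : EuclideanSpace ℝ (Fin n) → Fin n → ℝ := fun x i => pd i G x
    let r : EuclideanSpace ℝ (Fin n) → Fin n → ℝ := fun x i =>
      ∑ k, pd k (fun y => pd k (fun z => φ z i) y - pd i (fun z => φ z k) y) x
    (∀ x i, f x i = g x i + r x i) ∧
      (∃ G' : EuclideanSpace ℝ (Fin n) → ℝ, ∀ x i, g x i = pd i G' x) ∧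
      (∀ x, ∑ i, pd i (fun y => r y i) x = 0) := by
  intro G g r
  have hr : ∀ x i, r x i = f x i - g x i := fun x i => by
    rw [← hpoisson]
    exact divergence_jacobian_sub_transpose (hφ.of_le (by norm_num)) i x
  have hφ' : ∀ i, ContDiff ℝ 3 (fun z => φ z i) := contDiff_pi.mp hφ
  have hskew_smooth : ∀ i k, ContDiff ℝ 2 (fun y => jacobian φ y i k - jacobian φ y k i) :=
    fun i k => ((hφ' i).pd (by norm_num) k).sub ((hφ' k).pd (by norm_num) i)
  refine ⟨fun x i => by rw [hr]; ring, ⟨G, fun _ _ => rfl⟩, fun x => ?_⟩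
  exact divergence_divergence_eq_zero_of_antisymm hskew_smooth
    (fun _ _ _ => (neg_sub _ _).symm) x

/-- Helmholtz decomposition from a solution of the componentwise Poisson equation:
if `Δ φ = f` componentwise, then with `G = div φ`, `g = grad G` and
`r_i = ∑_k ∂_k (∂_k φ_i − ∂_i φ_k)`, one has `f = g + r`, `g` is a gradient field,
and `div r = 0`. -/
theorem helmholtz_decomposition_from_poisson (n : ℕ)
    (f φ : EuclideanSpace ℝ (Fin n) → Fin n → ℝ)
    (hφ : ContDiff ℝ 3 φ) (hf : ContDiff ℝ 1 f)
    (hpoisson : ∀ x i, ∑ k, pd k (pd k (fun z => φ z i)) x = f x i) :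
    let G : EuclideanSpace ℝ (Fin n) → ℝ := fun x => ∑ k, pd k (fun y => φ y k) x
    let g : EuclideanSpace ℝ (Fin n) → Fin n → ℝ := fun x i => pd i G x
    let r : EuclideanSpace ℝ (Fin n) → Fin n → ℝ := fun x i =>
      ∑ k, pd k (fun y => pd k (fun z => φ z i) y - pd i (fun z => φ z k) y) x
    (∀ x i, f x i = g x i + r x i) ∧
      (∃ G' : EuclideanSpace ℝ (Fin n) → ℝ, ∀ x i, g x i = pd i G' x) ∧
      (∀ x, ∑ i, pd i (fun y => r y i) x = 0) :=
  helmholtz_decomposition_from_poisson_general n f φ hφ hpoisson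
end

section
/- (Bondarenko-type formula, special case) Let a = (a₁, a₂) be a multi-index in ℕ², and suppose 2q > a₁. Then u(x₁, x₂) := Σ_{i=0}^{q−1} (-1)^i · x₂^{2i+2+a₂}/(2i+2+a₂)! · ∂_{x₁}^{2i}(x₁^{a₁}/a₁!) satisfies Δ u = x₁^{a₁} x₂^{a₂} / (a₁! a₂!), i.e., u solves Poisson's equation for the normalized monomial, where Δ = ∂²_{x₁} + ∂²_{x₂}. -/
/-- Two-dimensional Laplacian of a function of two real variables. -/
noncomputable def lap2 (f : ℝ → ℝ → ℝ) : ℝ → ℝ → ℝ := fun x y =>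
  deriv (fun t => deriv (fun s => f s y) t) x + deriv (fun t => deriv (fun s => f x s) t) y

lemma deriv_mono_term (c d : ℝ) (m : ℕ) (t : ℝ) :
    deriv (fun s : ℝ => c * s ^ (m+1) / (Nat.factorial (m+1) : ℝ) * d) t
      = c * t ^ m / (Nat.factorial m : ℝ) * d := by
  have h : (fun s : ℝ => c * s ^ (m+1) / (Nat.factorial (m+1) : ℝ) * d)
      = fun s => (c * d / (Nat.factorial (m+1) : ℝ)) * s ^ (m+1) := by
    funext s; ring
  rw [h, deriv_const_mul _ (differentiableAt_pow _), deriv_pow_field]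
  have hfz : (Nat.factorial m : ℝ) ≠ 0 := by exact_mod_cast Nat.factorial_ne_zero _
  have hfz1 : (Nat.factorial (m+1) : ℝ) ≠ 0 := by exact_mod_cast Nat.factorial_ne_zero _
  rw [Nat.factorial_succ]
  push_cast
  field_simp

lemma itd_mono (a : ℕ) : ∀ n : ℕ, iteratedDeriv n (fun t : ℝ => t ^ a / (Nat.factorial a : ℝ)) =
    fun t => if n ≤ a then t ^ (a - n) / (Nat.factorial (a - n) : ℝ) else 0 := by
  intro n
  induction n with
  | zero => simp
  | succ n ih =>
    rw [iteratedDeriv_succ, ih]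
    funext t
    by_cases h : n ≤ a
    · rcases eq_or_lt_of_le h with h' | h'
      · subst h'
        simp [Nat.sub_self]
      · have hk : a - n = (a - (n+1)) + 1 := by omega
        have h1 : n + 1 ≤ a := h'
        simp only [if_pos h, if_pos h1, hk]
        have hd := deriv_mono_term 1 1 (a - (n+1)) t
        simpa using hd
    · have h1 : ¬ (n + 1 ≤ a) := by omega
      simp [if_neg h, if_neg h1]
      exact fun h2 => absurd h2 (by omega)

lemma diff_itd (a n : ℕ) :
    Differentiable ℝ (iteratedDeriv n (fun t : ℝ => t ^ a / (Nat.factorial a : ℝ))) := by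
  rw [itd_mono]
  split_ifs
  · exact (differentiable_pow _).div_const _
  · exact differentiable_const 0

/-- Bondarenko-type formula (special case `m = 1`, two variables): for `2q > a₁`,
`u(x₁,x₂) = ∑_{i=0}^{q−1} (-1)^i x₂^{2i+2+a₂}/(2i+2+a₂)! · ∂_{x₁}^{2i}(x₁^{a₁}/a₁!)`
solves Poisson's equation `Δ u = x₁^{a₁} x₂^{a₂}/(a₁! a₂!)`. -/
theorem bondarenko_special_case (a₁ a₂ q : ℕ) (hq : a₁ < 2 * q) :
    let u : ℝ → ℝ → ℝ := fun x₁ x₂ =>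
      ∑ i ∈ Finset.range q,
        (-1 : ℝ) ^ i * x₂ ^ (2 * i + 2 + a₂) / (Nat.factorial (2 * i + 2 + a₂) : ℝ) *
          iteratedDeriv (2 * i) (fun t => t ^ a₁ / (Nat.factorial a₁ : ℝ)) x₁
    ∀ x₁ x₂ : ℝ,
      lap2 u x₁ x₂ = x₁ ^ a₁ * x₂ ^ a₂ / ((Nat.factorial a₁ : ℝ) * (Nat.factorial a₂ : ℝ)) := by
  intro u x₁ x₂
  set f : ℝ → ℝ := fun t => t ^ a₁ / (Nat.factorial a₁ : ℝ) with hf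
  -- second derivative in x₁
  have hx1 : deriv (fun t => deriv (fun s => u s x₂) t) x₁
      = ∑ i ∈ Finset.range q,
        (-1 : ℝ) ^ i * x₂ ^ (2 * i + 2 + a₂) / (Nat.factorial (2 * i + 2 + a₂) : ℝ) *
          iteratedDeriv (2 * i + 2) f x₁ := by
    have h1 : (fun t => deriv (fun s => u s x₂) t)
        = fun t => ∑ i ∈ Finset.range q,
          (-1 : ℝ) ^ i * x₂ ^ (2 * i + 2 + a₂) / (Nat.factorial (2 * i + 2 + a₂) : ℝ) *
            iteratedDeriv (2 * i + 1) f t := by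
      funext t
      show deriv (fun s => ∑ i ∈ Finset.range q,
        (-1 : ℝ) ^ i * x₂ ^ (2 * i + 2 + a₂) / (Nat.factorial (2 * i + 2 + a₂) : ℝ) *
          iteratedDeriv (2 * i) f s) t = _
      rw [deriv_fun_sum (fun i _ => ((diff_itd a₁ (2*i)) t).const_mul _)]
      refine Finset.sum_congr rfl fun i _ => ?_
      rw [deriv_const_mul _ ((diff_itd a₁ (2*i)) t), ← iteratedDeriv_succ]
    rw [h1]
    rw [deriv_fun_sum (fun i _ => ((diff_itd a₁ (2*i+1)) x₁).const_mul _)]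
    refine Finset.sum_congr rfl fun i _ => ?_
    rw [deriv_const_mul _ ((diff_itd a₁ (2*i+1)) x₁), ← iteratedDeriv_succ]
  -- second derivative in x₂
  have hx2 : deriv (fun t => deriv (fun s => u x₁ s) t) x₂
      = ∑ i ∈ Finset.range q,
        (-1 : ℝ) ^ i * x₂ ^ (2 * i + a₂) / (Nat.factorial (2 * i + a₂) : ℝ) *
          iteratedDeriv (2 * i) f x₁ := by
    have h1 : (fun t => deriv (fun s => u x₁ s) t)
        = fun t => ∑ i ∈ Finset.range q,
          (-1 : ℝ) ^ i * t ^ (2 * i + 1 + a₂) / (Nat.factorial (2 * i + 1 + a₂) : ℝ) *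
            iteratedDeriv (2 * i) f x₁ := by
      funext t
      show deriv (fun s => ∑ i ∈ Finset.range q,
        (-1 : ℝ) ^ i * s ^ (2 * i + 2 + a₂) / (Nat.factorial (2 * i + 2 + a₂) : ℝ) *
          iteratedDeriv (2 * i) f x₁) t = _
      rw [deriv_fun_sum (fun i _ => by fun_prop)]
      refine Finset.sum_congr rfl fun i _ => ?_
      have e1 : 2 * i + 2 + a₂ = (2 * i + 1 + a₂) + 1 := by omega
      rw [e1, deriv_mono_term]
    rw [h1]
    rw [deriv_fun_sum (fun i _ => by fun_prop)]
    refine Finset.sum_congr rfl fun i _ => ?_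
    have e1 : 2 * i + 1 + a₂ = (2 * i + a₂) + 1 := by omega
    rw [e1, deriv_mono_term]
  rw [show lap2 u x₁ x₂ = deriv (fun t => deriv (fun s => u s x₂) t) x₁
      + deriv (fun t => deriv (fun s => u x₁ s) t) x₂ from rfl, hx1, hx2]
  -- telescoping
  set F : ℕ → ℝ := fun i => (-1 : ℝ) ^ i * x₂ ^ (2 * i + a₂) / (Nat.factorial (2 * i + a₂) : ℝ) *
    iteratedDeriv (2 * i) f x₁ with hF
  have hfirst : ∑ i ∈ Finset.range q,
      (-1 : ℝ) ^ i * x₂ ^ (2 * i + 2 + a₂) / (Nat.factorial (2 * i + 2 + a₂) : ℝ) *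
        iteratedDeriv (2 * i + 2) f x₁ = ∑ i ∈ Finset.range q, -F (i + 1) := by
    refine Finset.sum_congr rfl fun i _ => ?_
    have e1 : 2 * (i + 1) + a₂ = 2 * i + 2 + a₂ := by omega
    have e2 : 2 * (i + 1) = 2 * i + 2 := by omega
    rw [hF]
    simp only [e1, e2, pow_succ]
    ring
  rw [show (∑ i ∈ Finset.range q,
      (-1 : ℝ) ^ i * x₂ ^ (2 * i + a₂) / (Nat.factorial (2 * i + a₂) : ℝ) *
        iteratedDeriv (2 * i) f x₁) = ∑ i ∈ Finset.range q, F i from rfl, hfirst]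
  have hq1 : 1 ≤ q := by omega
  have hFq : F q = 0 := by
    rw [hF]
    have h2 : ¬ (2 * q ≤ a₁) := by omega
    have : iteratedDeriv (2 * q) f x₁ = 0 := by
      simp [hf, itd_mono, h2]
      exact Or.inl (Or.inl hq)
    simp [this]
  have hF0 : F 0 = x₁ ^ a₁ * x₂ ^ a₂ / ((Nat.factorial a₁ : ℝ) * (Nat.factorial a₂ : ℝ)) := by
    rw [hF]
    simp only [pow_zero, Nat.mul_zero, Nat.zero_add, one_mul]
    rw [iteratedDeriv_zero, hf]
    ring
  have key : ∑ i ∈ Finset.range q, -F (i+1) + ∑ i ∈ Finset.range q, F i = F 0 - F q := by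
    rw [Finset.sum_neg_distrib]
    have := Finset.sum_range_succ' F q
    rw [Finset.sum_range_succ] at this
    -- this : ∑ i in range q, F i + F q = ∑ i in range q, F (i+1) + F 0
    linarith [this]
  rw [key, hFq, hF0, sub_zero]
end
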